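/- Let n be a natural number, let M be a finite subset of Fin n, and let B be a finite collection of subsets of Fin n such that every b ∈ B is nonempty, the sets in B are pairwise disjoint, and every b ∈ B is disjoint from M. Let d = |M| + ∑_{b ∈ B} (|b| − 1). Then the number of functions ω : Fin n → Bool satisfying both (i) ω(i) = true for all i ∈ M, and (ii) for every b ∈ B and all i, j ∈ b, ω(i) = ω(j), is exactly 2^{n − d}; consequently, under the uniform distribution on the 2^n functions Fin n → Bool, the probability of this event is 2^{−d}. -/

import Mathlib

/-!
Fixing the common value `c` of `ω` on one block `b` turns the block constraint into `#b` pinned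
coordinates, so splitting according to `c` and inducting on the blocks gives
`#β ^ #B * #β ^ (n - #M - ∑ #b)` admissible functions `ω : Fin n → β`: every constrained
coordinate is pinned except for one free value per block. For `β = Bool` this is `2 ^ (n - d)`,
and dividing by `2 ^ n` gives the probability `2 ^ (-d)`.
-/

open Finset

theorem ENNReal.pow_sub_div_pow {a : ENNReal} (h0 : a ≠ 0) (ht : a ≠ ⊤) {m n : ℕ} (h : m ≤ n) :
    a ^ (n - m) / a ^ n = a⁻¹ ^ m := by
  rw [← Nat.sub_add_cancel h, Nat.add_sub_cancel, pow_add, div_eq_mul_inv,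
    ENNReal.mul_inv (by simp [h0]) (by simp [ht]), ← mul_assoc,
    ENNReal.mul_inv_cancel (by simp [h0]) (by simp [ht]), one_mul, ENNReal.inv_pow]

theorem PMF.sum_uniformOfFintype_apply {γ : Type*} [Fintype γ] [Nonempty γ] (s : Finset γ) :
    ∑ a ∈ s, PMF.uniformOfFintype γ a = #s / Fintype.card γ := by
  simp [PMF.uniformOfFintype_apply, div_eq_mul_inv]

theorem Finset.card_union_biUnion_id {α : Type*} [DecidableEq α] (M : Finset α)
    (B : Finset (Finset α)) (hdisj : (B : Set (Finset α)).PairwiseDisjoint id)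
    (hM : ∀ b ∈ B, Disjoint b M) :
    #(M ∪ B.biUnion id) = #M + ∑ b ∈ B, #b := by
  rw [card_union_of_disjoint ((disjoint_biUnion_right M B id).2 fun b hb => (hM b hb).symm),
    card_biUnion hdisj]
  rfl

section ConstOnBlocks

variable {α β : Type*} [Fintype α] [DecidableEq α] [Fintype β] [DecidableEq β]

theorem card_filter_forall_mem_eq (M : Finset α) (v : α → β) :
    #{ω : α → β | ∀ i ∈ M, ω i = v i} = Fintype.card β ^ #Mᶜ := by
  have hpi : ({ω : α → β | ∀ i ∈ M, ω i = v i} : Finset _) =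
      Fintype.piFinset (fun i => if i ∈ M then {v i} else univ) := by
    ext ω
    simp only [mem_filter, mem_univ, true_and, Fintype.mem_piFinset]
    refine forall_congr' fun i => ?_
    split_ifs <;> simp [*]
  rw [hpi, Fintype.card_piFinset]
  simp [apply_ite card, prod_ite, filter_not, compl_eq_univ_sdiff]

def constOnBlocks (M : Finset α) (B : Finset (Finset α)) (v : α → β) : Finset (α → β) :=
  {ω | (∀ i ∈ M, ω i = v i) ∧ ∀ b ∈ B, ∀ i ∈ b, ∀ j ∈ b, ω i = ω j}

theorem filter_constOnBlocks_insert_apply_eq {M b : Finset α} {i₀ : α} (hi₀ : i₀ ∈ b)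
    (hbM : Disjoint b M) (B : Finset (Finset α)) (v : α → β) (c : β) :
    {ω ∈ constOnBlocks M (insert b B) v | ω i₀ = c} =
      constOnBlocks (M ∪ b) B (b.piecewise (fun _ => c) v) := by
  ext ω
  simp only [constOnBlocks, mem_filter, mem_univ, true_and, forall_mem_insert, mem_union,
    piecewise]
  constructor
  · rintro ⟨⟨hM, hb, hB⟩, rfl⟩
    refine ⟨fun i hi => ?_, hB⟩
    split_ifs with hib
    · exact hb i hib i₀ hi₀
    · exact hM i (hi.resolve_right hib)
  · rintro ⟨hMb, hB⟩
    have hb : ∀ i ∈ b, ω i = c := fun i hi => by simpa [hi] using hMb i (Or.inr hi)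
    refine ⟨⟨fun i hi => ?_, fun i hi j hj => (hb i hi).trans (hb j hj).symm, hB⟩, hb i₀ hi₀⟩
    simpa [disjoint_right.mp hbM hi] using hMb i (Or.inl hi)

theorem card_constOnBlocks (M : Finset α) (B : Finset (Finset α)) (v : α → β)
    (hne : ∀ b ∈ B, b.Nonempty) (hdisj : (B : Set (Finset α)).PairwiseDisjoint id)
    (hM : ∀ b ∈ B, Disjoint b M) :
    #(constOnBlocks M B v) = Fintype.card β ^ #B * Fintype.card β ^ #(M ∪ B.biUnion id)ᶜ := by
  induction B using Finset.induction_on generalizing M v with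
  | empty => simpa [constOnBlocks] using card_filter_forall_mem_eq M v
  | @insert b B hbB ih =>
    rw [forall_mem_insert] at hne hM
    rw [coe_insert, Set.pairwiseDisjoint_insert_of_notMem hbB] at hdisj
    obtain ⟨i₀, hi₀⟩ := hne.1
    have hfiber : ∀ c : β, #{ω ∈ constOnBlocks M (insert b B) v | ω i₀ = c} =
        Fintype.card β ^ #B * Fintype.card β ^ #(M ∪ (insert b B).biUnion id)ᶜ := fun c => by
      rw [filter_constOnBlocks_insert_apply_eq hi₀ hM.1, ih (M ∪ b) _ hne.2 hdisj.1 fun b' hb' =>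
        disjoint_union_right.2 ⟨hM.2 b' hb', (hdisj.2 b' hb').symm⟩, biUnion_insert, union_assoc]
      rfl
    rw [card_eq_sum_card_fiberwise (fun ω _ => mem_univ (ω i₀)), sum_congr rfl fun c _ => hfiber c,
      sum_const, card_univ, card_insert_of_notMem hbB, smul_eq_mul, pow_succ]
    ring

end ConstOnBlocks

theorem stmt_13 (n : ℕ) (M : Finset (Fin n)) (B : Finset (Finset (Fin n)))
    (hne : ∀ b ∈ B, b.Nonempty)
    (hdisj : ∀ b ∈ B, ∀ b' ∈ B, b ≠ b' → Disjoint b b')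
    (hM : ∀ b ∈ B, Disjoint b M)
    (d : ℕ) (hd : d = M.card + ∑ b ∈ B, (b.card - 1)) :
    (Finset.univ.filter (fun ω : Fin n → Bool =>
        (∀ i ∈ M, ω i = true) ∧ ∀ b ∈ B, ∀ i ∈ b, ∀ j ∈ b, ω i = ω j)).card = 2 ^ (n - d) ∧
      ∑ ω ∈ Finset.univ.filter (fun ω : Fin n → Bool =>
          (∀ i ∈ M, ω i = true) ∧ ∀ b ∈ B, ∀ i ∈ b, ∀ j ∈ b, ω i = ω j),
          PMF.uniformOfFintype (Fin n → Bool) ω = (1 / 2 : ENNReal) ^ d := by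
  -- Equal only up to decidability instances (the statement uses `Nat.decidableForallFin`).
  have hS : univ.filter (fun ω : Fin n → Bool =>
      (∀ i ∈ M, ω i = true) ∧ ∀ b ∈ B, ∀ i ∈ b, ∀ j ∈ b, ω i = ω j) =
      constOnBlocks M B fun _ => true := by
    unfold constOnBlocks
    congr
  rw [hS]
  have hcover := card_union_biUnion_id M B hdisj hM
  have hcover_le : #M + ∑ b ∈ B, #b ≤ n :=
    hcover ▸ card_le_univ _ |>.trans_eq (Fintype.card_fin n)
  have hblocks : ∑ b ∈ B, #b = ∑ b ∈ B, (#b - 1) + #B := by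
    rw [card_eq_sum_ones, ← sum_add_distrib]
    exact sum_congr rfl fun b hb => (Nat.sub_add_cancel (hne b hb).card_pos).symm
  have hcard : #(constOnBlocks M B fun _ => true) = 2 ^ (n - d) := by
    rw [card_constOnBlocks M B _ hne hdisj hM, card_compl, hcover, Fintype.card_bool,
      Fintype.card_fin, ← pow_add]
    congr 1
    omega
  refine ⟨hcard, ?_⟩
  rw [PMF.sum_uniformOfFintype_apply, hcard, Fintype.card_fun, Fintype.card_bool,
    Fintype.card_fin]
  push_cast
  rw [ENNReal.pow_sub_div_pow two_ne_zero ENNReal.ofNat_ne_top (by omega), one_div]
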